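/- Let lambda be a partition and let w_lambda in S_infty be the dominant permutation of shape lambda, i.e., the unique permutation whose Rothe diagram D(w_lambda) := {(i, w_lambda(j)) : i < j, w_lambda(i) > w_lambda(j)} equals the Young diagram D_lambda. Then R(w_lambda) is a single Coxeter–Knuth equivalence class, and the tableau T_lambda of shape lambda with entry i+j-1 in each position (i,j) of D_lambda is the unique increasing tableau of partition shape with revrow(T_lambda) in R(w_lambda). -/

import Mathlib

open MvPolynomial

/-! ### Permutations of ℤ, reduced words -/

/-- The simple transposition `s_i = (i, i+1)` of `ℤ`. -/
def sT (i : ℤ) : Equiv.Perm ℤ := Equiv.swap i (i + 1)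

/-- The product `s_{i_1} s_{i_2} ⋯ s_{i_l}` of the simple transpositions indexed by a word. -/
def wordProd (l : List ℤ) : Equiv.Perm ℤ := (l.map sT).prod

/-- `S_ℤ`: the subgroup of permutations of `ℤ` generated by the simple transpositions. -/
def SZSet : Set (Equiv.Perm ℤ) := {w | ∃ l : List ℤ, wordProd l = w}

/-- `S_∞`: the subgroup generated by `s_i` for `i ≥ 1`. -/
def SinftySet : Set (Equiv.Perm ℤ) :=
  {w | ∃ l : List ℤ, (∀ i ∈ l, 1 ≤ i) ∧ wordProd l = w}

/-- `S_n`: the subgroup generated by `s_i` for `1 ≤ i ≤ n-1`. -/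
def SnSet (n : ℕ) : Set (Equiv.Perm ℤ) :=
  {w | ∃ l : List ℤ, (∀ i ∈ l, 1 ≤ i ∧ i < n) ∧ wordProd l = w}

/-- A reduced word for `w`: a minimal length word whose product is `w`. -/
def IsReducedWord (w : Equiv.Perm ℤ) (l : List ℤ) : Prop :=
  wordProd l = w ∧ ∀ m : List ℤ, wordProd m = w → l.length ≤ m.length

/-- The Coxeter length of `w` (the length of any reduced word for `w`). -/
noncomputable def lenOf (w : Equiv.Perm ℤ) : ℕ :=
  sInf {m | ∃ l : List ℤ, wordProd l = w ∧ l.length = m}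

/-- The inversion set `Inv(w) = {(a,b) : a < b, w(a) > w(b)}`. -/
def InvSet (w : Equiv.Perm ℤ) : Set (ℤ × ℤ) := {p | p.1 < p.2 ∧ w p.2 < w p.1}

/-- The Lehmer code `c_i(w) = #{j : i < j, w(i) > w(j)}`. -/
noncomputable def codeOf (w : Equiv.Perm ℤ) (i : ℤ) : ℕ := {j : ℤ | i < j ∧ w j < w i}.ncard

/-- The Rothe diagram `D(w) = {(i, w(j)) : i < j, w(i) > w(j)}`. -/
def RotheD (w : Equiv.Perm ℤ) : Set (ℤ × ℤ) :=
  {p | ∃ j : ℤ, p.1 < j ∧ w j < w p.1 ∧ p.2 = w j}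

/-! ### Primed letters and primed words -/

/-- A primed letter: `(x, false)` denotes the integer `x`, `(x, true)` denotes `x' = x - 1/2`. -/
abbrev PLetter := ℤ × Bool

/-- Twice the value of a primed letter (so that comparisons agree with `1' < 1 < 2' < 2 < ⋯`). -/
def pval (p : PLetter) : ℤ := 2 * p.1 - (if p.2 then 1 else 0)

/-- A strictly decreasing primed word. -/
def PDec (l : List PLetter) : Prop := l.Pairwise (fun p q => pval q < pval p)

/-- A strictly decreasing integer word. -/
def ZDec (l : List ℤ) : Prop := l.Pairwise (fun x y => y < x)

/-- Remove the primes from a primed word (the "ceiling"). -/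
def unprimeW (l : List PLetter) : List ℤ := l.map Prod.fst

/-- Membership in `R⁺(w)`: a primed word whose unprimed form is a reduced word for `w`. -/
def IsPrimedReducedWord (w : Equiv.Perm ℤ) (l : List PLetter) : Prop :=
  IsReducedWord w (unprimeW l)

/-- The set `Marked(i)` of marked inversions of a primed word. -/
def markedSet (l : List PLetter) : Set (ℤ × ℤ) :=
  {p | ∃ j : Fin l.length, (l.get j).2 = true ∧
        p.1 = wordProd ((l.drop ((j : ℕ) + 1)).reverse.map Prod.fst) (l.get j).1 ∧
        p.2 = wordProd ((l.drop ((j : ℕ) + 1)).reverse.map Prod.fst) ((l.get j).1 + 1)}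

/-! ### Factorizations (as sequences of factors) -/

/-- The concatenation of the first `N` factors of a factorization. -/
def concatP (a : ℕ → List PLetter) (N : ℕ) : List PLetter := ((List.range N).map a).flatten

/-- The concatenation of the first `N` factors of an unprimed factorization. -/
def concatZ (a : ℕ → List ℤ) (N : ℕ) : List ℤ := ((List.range N).map a).flatten

/-- `RF⁺(w, A)`: decreasing primed reduced factorizations of `w` with marked set `A`
(all but finitely many factors empty). -/
def RFplus (w : Equiv.Perm ℤ) (A : Set (ℤ × ℤ)) : Set (ℕ → List PLetter) :=
  {a | (∀ i, PDec (a i)) ∧ ∃ N : ℕ, (∀ m, N ≤ m → a m = []) ∧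
        IsPrimedReducedWord w (concatP a N) ∧ markedSet (concatP a N) = A}

/-- `RF⁺_n(w, A)`: elements of `RF⁺(w, A)` with all factors beyond the first `n` empty. -/
def RFplusN (n : ℕ) (w : Equiv.Perm ℤ) (A : Set (ℤ × ℤ)) : Set (ℕ → List PLetter) :=
  {a | (∀ i, PDec (a i)) ∧ (∀ m, n ≤ m → a m = []) ∧
        IsPrimedReducedWord w (concatP a n) ∧ markedSet (concatP a n) = A}

/-- `RF_n(w)`: unprimed decreasing reduced factorizations of `w` into at most `n` factors. -/
def RFZn (n : ℕ) (w : Equiv.Perm ℤ) : Set (ℕ → List ℤ) :=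
  {a | (∀ i, ZDec (a i)) ∧ (∀ m, n ≤ m → a m = []) ∧ IsReducedWord w (concatZ a n)}

/-- Removing the primes from each factor of a primed factorization. -/
def unprimeF (a : ℕ → List PLetter) : ℕ → List ℤ := fun m => unprimeW (a m)

/-! ### The pairing procedure and crystal operators (primed version) -/

/-- Find the first letter `b` in the (decreasing) list with `⌈b⌉ < c`, removing it. -/
def findPairP (c : ℤ) : List PLetter → Option PLetter × List PLetter
  | [] => (none, [])
  | b :: rest =>
      if b.1 < c then (some b, rest)
      else
        let r := findPairP c rest
        (r.1, b :: r.2)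

/-- Iterate the pairing over the letters of `v` from right to left. -/
def pairFoldP (u : List PLetter) (vrev : List PLetter) :
    List (PLetter × PLetter) × List PLetter :=
  vrev.foldl (fun st c =>
    match findPairP c.1 st.2 with
    | (none, r) => (st.1, r)
    | (some b, r) => ((b, c) :: st.1, r)) ([], u)

/-- The set `pair(u, v)` of paired letters, as a list of pairs. -/
def pairsP (u v : List PLetter) : List (PLetter × PLetter) := (pairFoldP u v.reverse).1

/-- The unpaired letters of `v` (in decreasing order). -/
def unpairedSnd (u v : List PLetter) : List PLetter :=
  v.filter fun c => decide (c ∉ (pairsP u v).map Prod.snd)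

/-- The unpaired letters of `u` (in decreasing order). -/
def unpairedFst (u v : List PLetter) : List PLetter :=
  u.filter fun b => decide (b ∉ (pairsP u v).map Prod.fst)

theorem exists_add_not_mem (L : List ℤ) (x : ℤ) : ∃ q : ℕ, x + q ∉ L := by
  have h : ∃ q : ℕ, ∀ y ∈ L, y < x + q := by
    induction L with
    | nil => exact ⟨1, by simp⟩
    | cons a t ih =>
      obtain ⟨q, hq⟩ := ih
      refine ⟨q + (a - x).toNat + 1, ?_⟩
      intro y hy
      rcases List.mem_cons.mp hy with rfl | h
      · push_cast; omega
      · have := hq y h; push_cast; omega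
  obtain ⟨q, hq⟩ := h
  exact ⟨q, fun hmem => lt_irrefl _ (hq _ hmem)⟩

theorem exists_sub_not_mem (L : List ℤ) (x : ℤ) : ∃ q : ℕ, x - q ∉ L := by
  have h : ∃ q : ℕ, ∀ y ∈ L, x - q < y := by
    induction L with
    | nil => exact ⟨1, by simp⟩
    | cons a t ih =>
      obtain ⟨q, hq⟩ := ih
      refine ⟨q + (x - a).toNat + 1, ?_⟩
      intro y hy
      rcases List.mem_cons.mp hy with rfl | h
      · push_cast; omega
      · have := hq y h; push_cast; omega
  obtain ⟨q, hq⟩ := h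
  exact ⟨q, fun hmem => lt_irrefl _ (hq _ hmem)⟩

/-- The minimal `q ∈ ℕ` with `x + q ∉ L`. -/
def qUp (L : List ℤ) (x : ℤ) : ℕ := Nat.find (exists_add_not_mem L x)

/-- The minimal `q ∈ ℕ` with `x - q ∉ L`. -/
def qDown (L : List ℤ) (x : ℤ) : ℕ := Nat.find (exists_sub_not_mem L x)

/-- Reverse the prime on a primed letter. -/
def toggleP (p : PLetter) : PLetter := (p.1, !p.2)

/-- Toggle the prime on the occurrence of the letter `p` in a primed word. -/
def toggleIn (l : List PLetter) (p : PLetter) : List PLetter :=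
  l.map fun q => if q = p then toggleP q else q

/-- Swap the primes on a pair `(b, c)` with `b` in the first word and `c` in the second:
reverse both primes when exactly one of the two letters is primed. -/
def swapPairIn (uv : List PLetter × List PLetter) (bc : PLetter × PLetter) :
    List PLetter × List PLetter :=
  if bc.1.2 = bc.2.2 then uv else (toggleIn uv.1 bc.1, toggleIn uv.2 bc.2)

/-- Insert a letter into a decreasing primed word at the correct position. -/
def insertDecP (p : PLetter) : List PLetter → List PLetter
  | [] => [p]
  | q :: t => if pval q < pval p then p :: q :: t else q :: insertDecP p t

/-- The raising crystal operator acting on a consecutive pair of factors (primed version). -/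
def eStepP (u v : List PLetter) : Option (List PLetter × List PLetter) :=
  match unpairedSnd u v with
  | [] => none
  | x :: _ =>
    let q : ℕ := qUp (unprimeW u) x.1
    let toSwap := (pairsP u v).filter fun bc => decide (x.1 < bc.2.1 ∧ bc.2.1 ≤ x.1 + q)
    some (toSwap.foldl swapPairIn (insertDecP (x.1 + q, x.2) u, v.erase x))

/-- The lowering crystal operator acting on a consecutive pair of factors (primed version). -/
def fStepP (u v : List PLetter) : Option (List PLetter × List PLetter) :=
  match (unpairedFst u v).getLast? with
  | none => none
  | some y =>
    let q : ℕ := qDown (unprimeW v) y.1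
    let toSwap := (pairsP u v).filter fun bc => decide (y.1 - q ≤ bc.1.1 ∧ bc.1.1 < y.1)
    some (toSwap.foldl swapPairIn (u.erase y, insertDecP (y.1 - q, y.2) v))

/-- Apply a two-factor operator at position `(i, i+1)` of a factorization. -/
def applyAtP (g : List PLetter → List PLetter → Option (List PLetter × List PLetter))
    (i : ℕ) (a : ℕ → List PLetter) : Option (ℕ → List PLetter) :=
  (g (a i) (a (i + 1))).map fun uv =>
    Function.update (Function.update a i uv.1) (i + 1) uv.2

/-- The crystal operator `e` on primed factorizations acting on factors `i, i+1` (0-indexed). -/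
def eP (i : ℕ) (a : ℕ → List PLetter) : Option (ℕ → List PLetter) := applyAtP eStepP i a

/-- The crystal operator `f` on primed factorizations acting on factors `i, i+1` (0-indexed). -/
def fP (i : ℕ) (a : ℕ → List PLetter) : Option (ℕ → List PLetter) := applyAtP fStepP i a

/-! ### Crystal operators (unprimed version) -/

def findPairZ (c : ℤ) : List ℤ → Option ℤ × List ℤ
  | [] => (none, [])
  | b :: rest =>
      if b < c then (some b, rest)
      else
        let r := findPairZ c rest
        (r.1, b :: r.2)

def pairFoldZ (u : List ℤ) (vrev : List ℤ) : List (ℤ × ℤ) × List ℤ :=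
  vrev.foldl (fun st c =>
    match findPairZ c st.2 with
    | (none, r) => (st.1, r)
    | (some b, r) => ((b, c) :: st.1, r)) ([], u)

/-- The set `pair(u, v)` for integer words. -/
def pairsZ (u v : List ℤ) : List (ℤ × ℤ) := (pairFoldZ u v.reverse).1

def insertDecZ (x : ℤ) : List ℤ → List ℤ
  | [] => [x]
  | q :: t => if q < x then x :: q :: t else q :: insertDecZ x t

/-- The raising crystal operator on a consecutive pair of integer factors. -/
def eStepZ (u v : List ℤ) : Option (List ℤ × List ℤ) :=
  match v.filter (fun c => decide (c ∉ (pairsZ u v).map Prod.snd)) with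
  | [] => none
  | x :: _ =>
    let q : ℕ := qUp u x
    some (insertDecZ (x + q) u, v.erase x)

/-- The lowering crystal operator on a consecutive pair of integer factors. -/
def fStepZ (u v : List ℤ) : Option (List ℤ × List ℤ) :=
  match (u.filter (fun b => decide (b ∉ (pairsZ u v).map Prod.fst))).getLast? with
  | none => none
  | some y =>
    let q : ℕ := qDown v y
    some (u.erase y, insertDecZ (y - q) v)

def applyAtZ (g : List ℤ → List ℤ → Option (List ℤ × List ℤ))
    (i : ℕ) (a : ℕ → List ℤ) : Option (ℕ → List ℤ) :=
  (g (a i) (a (i + 1))).map fun uv =>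
    Function.update (Function.update a i uv.1) (i + 1) uv.2

/-- The crystal operator `e` acting on factors `i, i+1` (0-indexed) of an integer factorization,
so that `eZ i` is the paper's `e_{i+1}`. -/
def eZ (i : ℕ) (a : ℕ → List ℤ) : Option (ℕ → List ℤ) := applyAtZ eStepZ i a

/-- The crystal operator `f` acting on factors `i, i+1` (0-indexed). -/
def fZ (i : ℕ) (a : ℕ → List ℤ) : Option (ℕ → List ℤ) := applyAtZ fStepZ i a

/-! ### Coxeter–Knuth equivalence and tableaux -/

/-- One elementary Coxeter–Knuth move. -/
inductive CKStep : List ℤ → List ℤ → Prop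
  | acb (u v : List ℤ) {a b c : ℤ} (h1 : a < b) (h2 : b < c) :
      CKStep (u ++ a :: c :: b :: v) (u ++ c :: a :: b :: v)
  | bca (u v : List ℤ) {a b c : ℤ} (h1 : a < b) (h2 : b < c) :
      CKStep (u ++ b :: c :: a :: v) (u ++ b :: a :: c :: v)
  | braid (u v : List ℤ) {a b : ℤ} (h : b = a + 1 ∨ b = a - 1) :
      CKStep (u ++ a :: b :: a :: v) (u ++ b :: a :: b :: v)

/-- Coxeter–Knuth equivalence. -/
def CKEquiv : List ℤ → List ℤ → Prop := Relation.EqvGen CKStep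

/-- A tableau is recorded as its list of rows; its shape is the list of row lengths. -/
def shapeOf (T : List (List ℤ)) : List ℕ := T.map List.length

/-- The row reading word: rows left to right, starting with the last row. -/
def rowword (T : List (List ℤ)) : List ℤ := T.reverse.flatten

/-- The reverse row reading word. -/
def revrow (T : List (List ℤ)) : List ℤ := (rowword T).reverse

/-- The entry of `T` in row `i`, position `j` within the row (both 0-indexed). -/
def entryOf (T : List (List ℤ)) (i j : ℕ) : ℤ := (T.getD i []).getD j 0

/-- `T` has partition shape: rows nonempty with weakly decreasing lengths. -/
def IsPartShape (T : List (List ℤ)) : Prop :=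
  (∀ r ∈ T, r ≠ []) ∧ ∀ i, i + 1 < T.length → (T.getD (i + 1) []).length ≤ (T.getD i []).length

/-- An increasing tableau of partition shape. -/
def IncrTab (T : List (List ℤ)) : Prop :=
  IsPartShape T ∧ (∀ r ∈ T, r.Pairwise (· < ·)) ∧
  ∀ i j, i + 1 < T.length → j < (T.getD (i + 1) []).length → entryOf T i j < entryOf T (i + 1) j

/-- A decreasing tableau of partition shape. -/
def DecrTab (T : List (List ℤ)) : Prop :=
  IsPartShape T ∧ (∀ r ∈ T, r.Pairwise (fun x y => y < x)) ∧
  ∀ i j, i + 1 < T.length → j < (T.getD (i + 1) []).length → entryOf T (i + 1) j < entryOf T i j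

/-! ### Shifted tableaux -/

/-- Strict partition shape: rows nonempty with strictly decreasing lengths.  Row `i`
(0-indexed) of a shifted tableau occupies columns `i, i+1, …`. -/
def IsStrictShape (T : List (List ℤ)) : Prop :=
  (∀ r ∈ T, r ≠ []) ∧ ∀ i, i + 1 < T.length → (T.getD (i + 1) []).length < (T.getD i []).length

/-- An increasing shifted tableau: rows and columns strictly increase.  In row-list
coordinates, the entry of row `i+1` in within-row position `j` lies in the same column as the
entry of row `i` in within-row position `j+1`. -/
def ShIncrTab (T : List (List ℤ)) : Prop :=
  IsStrictShape T ∧ (∀ r ∈ T, r.Pairwise (· < ·)) ∧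
  ∀ i j, i + 1 < T.length → j < (T.getD (i + 1) []).length →
    entryOf T i (j + 1) < entryOf T (i + 1) j

/-- A decreasing shifted tableau. -/
def ShDecrTab (T : List (List ℤ)) : Prop :=
  IsStrictShape T ∧ (∀ r ∈ T, r.Pairwise (fun x y => y < x)) ∧
  ∀ i j, i + 1 < T.length → j < (T.getD (i + 1) []).length →
    entryOf T (i + 1) j < entryOf T i (j + 1)

/-! ### Young diagrams of partitions given as lists -/

/-- The Young diagram of a partition given as a list of row lengths (1-indexed positions). -/
def YDiagL (lam : List ℕ) : Set (ℤ × ℤ) :=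
  {p | 1 ≤ p.1 ∧ 1 ≤ p.2 ∧ p.2 ≤ (lam.getD (p.1 - 1).toNat 0 : ℤ)}

/-- The tableau `T_λ` with entry `i + j - 1` in each box `(i, j)` of `D_λ` (1-indexed). -/
def Tlam (lam : List ℕ) : List (List ℤ) :=
  lam.mapIdx fun i k => (List.range k).map fun j => ((i + j + 1 : ℕ) : ℤ)

/-! ### Fixed-point-free involutions -/

def fpfFun (i : ℤ) : ℤ := if Even i then i - 1 else i + 1

theorem fpfFun_involutive : Function.Involutive fpfFun := by
  intro i
  simp only [fpfFun, Int.even_iff]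
  split <;> split <;> omega

/-- The fixed-point-free involution `1_fpf : i ↦ i - (-1)^i`. -/
def onefpf : Equiv.Perm ℤ :=
  ⟨fpfFun, fpfFun, fpfFun_involutive, fpfFun_involutive⟩

/-- `I^fpf_ℤ`: the `S_ℤ`-conjugation orbit of `1_fpf`. -/
def IfpfZ : Set (Equiv.Perm ℤ) := {z | ∃ w ∈ SZSet, z = w⁻¹ * onefpf * w}

/-- `I^fpf_∞`: the `S_∞`-conjugation orbit of `1_fpf`. -/
def IfpfInfty : Set (Equiv.Perm ℤ) := {z | ∃ w ∈ SinftySet, z = w⁻¹ * onefpf * w}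

/-- `𝒜^Sp(z)`: minimal-length `w ∈ S_ℤ` with `z = w⁻¹ 1_fpf w`. -/
def ASp (z : Equiv.Perm ℤ) : Set (Equiv.Perm ℤ) :=
  {w | w ∈ SZSet ∧ z = w⁻¹ * onefpf * w ∧
       ∀ v ∈ SZSet, z = v⁻¹ * onefpf * v → lenOf w ≤ lenOf v}

/-- `R^Sp(z)`: the set of fpf-involution words for `z`. -/
def RSp (z : Equiv.Perm ℤ) : Set (List ℤ) := {l | ∃ w ∈ ASp z, IsReducedWord w l}

/-- The fpf-involution code `c^Sp_i(z)`. -/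
noncomputable def cSp (z : Equiv.Perm ℤ) (i : ℤ) : ℕ :=
  {j : ℤ | i < j ∧ z j < min i (z i)}.ncard

/-- `RF^Sp_n(z)`: symplectic reduced factorizations into at most `n` decreasing factors. -/
def RFSp (n : ℕ) (z : Equiv.Perm ℤ) : Set (ℕ → List ℤ) :=
  {a | (∀ i, ZDec (a i)) ∧ (∀ m, n ≤ m → a m = []) ∧ concatZ a n ∈ RSp z}

/-- `BRF^Sp_n(z)`: the bounded (by the standard flag) symplectic reduced factorizations:
every letter `m` of the factor in (0-indexed) position `i` satisfies `m ≥ i + 1`. -/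
def BRFSp (n : ℕ) (z : Equiv.Perm ℤ) : Set (ℕ → List ℤ) :=
  {a | a ∈ RFSp n z ∧ ∀ m, ∀ x ∈ a m, (m : ℤ) + 1 ≤ x}

/-! ### Symplectic Coxeter–Knuth equivalence -/

/-- The extra symplectic relations, affecting the first two letters. -/
inductive SpExtra : List ℤ → List ℤ → Prop
  | down (a : ℤ) (t : List ℤ) : SpExtra (a :: (a - 1) :: t) (a :: (a + 1) :: t)
  | comm (a b : ℤ) (t : List ℤ) (h : a % 2 = b % 2) : SpExtra (a :: b :: t) (b :: a :: t)

/-- Symplectic Coxeter–Knuth equivalence. -/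
def SpCKEquiv : List ℤ → List ℤ → Prop :=
  Relation.EqvGen (fun x y => CKStep x y ∨ SpExtra x y)

/-- `half_<(λ)` for a partition given as a list: positive values among `λ_i - i`. -/
def halfLtL (lam : List ℕ) : List ℕ :=
  ((List.range lam.length).map fun k => ((lam.getD k 0 : ℤ) - (k + 1)).toNat).filter
    fun m => decide (0 < m)

/-- The shifted tableau `T^Sp_λ` of shape `half_<(λ)` with entry `i + j` in box `(i,j) ∈ SD_μ`. -/
def TSpTab (lam : List ℕ) : List (List ℤ) :=
  (halfLtL lam).mapIdx fun k m => (List.range m).map fun t => ((2 * (k + 1) + t : ℕ) : ℤ)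

/-- Symmetric partition (list version): the diagram is invariant under transposition. -/
def SymmPartL (lam : List ℕ) : Prop :=
  ∀ p : ℤ × ℤ, p ∈ YDiagL lam ↔ (p.2, p.1) ∈ YDiagL lam

/-- Skew-symmetric partition (list version). -/
def SkewSymmPartL (lam : List ℕ) : Prop :=
  SymmPartL lam ∧ ∀ i : ℤ, (i, i) ∈ YDiagL lam → (i + 1, i + 1) ∉ YDiagL lam →
    (¬ ∃ mu : List ℕ, mu.Pairwise (· ≥ ·) ∧ YDiagL mu = YDiagL lam ∪ {(i, i + 1)} ∧
        YDiagL mu ≠ YDiagL lam) ∧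
    (¬ ∃ mu : List ℕ, mu.Pairwise (· ≥ ·) ∧ YDiagL mu = YDiagL lam \ {(i, i + 1)} ∧
        YDiagL mu ≠ YDiagL lam)

/-! ### Demazure product, orthogonal involution words -/

/-- One step of the Demazure product: multiply by `s_i` on the left if this increases length. -/
noncomputable def demStep (i : ℤ) (x : Equiv.Perm ℤ) : Equiv.Perm ℤ :=
  if lenOf x < lenOf (sT i * x) then sT i * x else x

/-- The Demazure product of the letters of a word. -/
noncomputable def demWordProd (l : List ℤ) : Equiv.Perm ℤ := l.foldr demStep 1

/-- `𝒜^O(z)`: minimal-length `w` with `z = w⁻¹ ∘ w` (Demazure product). -/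
def AO (z : Equiv.Perm ℤ) : Set (Equiv.Perm ℤ) :=
  {w | (∃ l : List ℤ, IsReducedWord w l ∧ demWordProd (l.reverse ++ l) = z) ∧
       ∀ v : Equiv.Perm ℤ, (∃ l : List ℤ, IsReducedWord v l ∧ demWordProd (l.reverse ++ l) = z) →
         lenOf w ≤ lenOf v}

/-- `Cyc(z) = {(a, b) : a < b = z(a)}`. -/
def CycSet (z : Equiv.Perm ℤ) : Set (ℤ × ℤ) := {p | p.1 < p.2 ∧ z p.1 = p.2}

/-- `R^O(z)`: the set of primed involution words for `z`. -/
def RO (z : Equiv.Perm ℤ) : Set (List PLetter) :=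
  {l | ∃ A ⊆ CycSet z, ∃ w ∈ AO z, IsPrimedReducedWord w l ∧ markedSet l = A}

/-- The involution code `c^O_i(z)`. -/
noncomputable def cO (z : Equiv.Perm ℤ) (i : ℤ) : ℕ :=
  {j : ℤ | i < j ∧ z j ≤ min i (z i)}.ncard

/-- `RF^O_n(z)`: orthogonal (primed) reduced factorizations into at most `n` factors. -/
def RFO (n : ℕ) (z : Equiv.Perm ℤ) : Set (ℕ → List PLetter) :=
  {a | (∀ i, PDec (a i)) ∧ (∀ m, n ≤ m → a m = []) ∧ concatP a n ∈ RO z}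

/-- The unprimed image `uRF^O_n(z)` of `RF^O_n(z)`. -/
def uRFO (n : ℕ) (z : Equiv.Perm ℤ) : Set (ℕ → List ℤ) := unprimeF '' RFO n z

/-! ### Primed and orthogonal Coxeter–Knuth equivalence -/

/-- One elementary primed Coxeter–Knuth move. -/
inductive PCKStep : List PLetter → List PLetter → Prop
  | swapACB (u v : List PLetter) {A B C : PLetter} (h1 : A.1 < B.1) (h2 : B.1 < C.1) :
      PCKStep (u ++ A :: C :: B :: v) (u ++ C :: A :: B :: v)
  | swapBCA (u v : List PLetter) {A B C : PLetter} (h1 : A.1 < B.1) (h2 : B.1 < C.1) :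
      PCKStep (u ++ B :: C :: A :: v) (u ++ B :: A :: C :: v)
  | braid00 (u v : List PLetter) {a b : ℤ} (h : b = a + 1 ∨ b = a - 1) :
      PCKStep (u ++ (a, false) :: (b, false) :: (a, false) :: v)
              (u ++ (b, false) :: (a, false) :: (b, false) :: v)
  | braid11 (u v : List PLetter) {a b : ℤ} (h : b = a + 1 ∨ b = a - 1) :
      PCKStep (u ++ (a, true) :: (b, true) :: (a, true) :: v)
              (u ++ (b, true) :: (a, true) :: (b, true) :: v)
  | mixA (u v : List PLetter) {a b : ℤ} (h : b = a + 1 ∨ b = a - 1) :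
      PCKStep (u ++ (a, true) :: (b, false) :: (a, false) :: v)
              (u ++ (b, false) :: (a, false) :: (b, true) :: v)
  | mixB (u v : List PLetter) {a b : ℤ} (h : b = a + 1 ∨ b = a - 1) :
      PCKStep (u ++ (a, false) :: (b, true) :: (a, false) :: v)
              (u ++ (b, false) :: (a, true) :: (b, false) :: v)
  | mixC (u v : List PLetter) {a b : ℤ} (h : b = a + 1 ∨ b = a - 1) :
      PCKStep (u ++ (a, true) :: (b, true) :: (a, false) :: v)
              (u ++ (b, false) :: (a, true) :: (b, true) :: v)
  | mixD (u v : List PLetter) {a b : ℤ} (h : b = a + 1 ∨ b = a - 1) :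
      PCKStep (u ++ (a, true) :: (b, false) :: (a, true) :: v)
              (u ++ (b, true) :: (a, false) :: (b, true) :: v)

/-- The extra orthogonal relations, affecting the first letters of words. -/
inductive OExtra : List PLetter → List PLetter → Prop
  | prime (a : ℤ) (w : List PLetter) : OExtra ((a, false) :: w) ((a, true) :: w)
  | comm00 (a b : ℤ) (w : List PLetter) :
      OExtra ((a, false) :: (b, false) :: w) ((b, false) :: (a, false) :: w)
  | comm01 (a b : ℤ) (w : List PLetter) :
      OExtra ((a, false) :: (b, true) :: w) ((b, false) :: (a, true) :: w)
  | comm10 (a b : ℤ) (w : List PLetter) :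
      OExtra ((a, true) :: (b, false) :: w) ((b, true) :: (a, false) :: w)
  | comm11 (a b : ℤ) (w : List PLetter) :
      OExtra ((a, true) :: (b, true) :: w) ((b, true) :: (a, true) :: w)

/-- Orthogonal Coxeter–Knuth equivalence. -/
def OCKEquiv : List PLetter → List PLetter → Prop :=
  Relation.EqvGen (fun x y => PCKStep x y ∨ OExtra x y)

/-- Increasing shifted tableau with primed entries: removing the primes yields an increasing
shifted tableau. -/
def ShIncrTabP (T : List (List PLetter)) : Prop := ShIncrTab (T.map unprimeW)

/-- Decreasing shifted tableau with primed entries. -/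
def ShDecrTabP (T : List (List PLetter)) : Prop := ShDecrTab (T.map unprimeW)

/-- No primed entries on the main diagonal (the first entry of each row). -/
def DiagUnprimed (T : List (List PLetter)) : Prop :=
  ∀ r ∈ T, ∀ p : PLetter, r.head? = some p → p.2 = false

/-- The row reading word of a primed shifted tableau. -/
def rowwordP (T : List (List PLetter)) : List PLetter := T.reverse.flatten

/-- The shape of a primed tableau. -/
def shapeOfP (T : List (List PLetter)) : List ℕ := T.map List.length

/-! ### Iterated partial operators -/

def iterOpt {α : Type*} (g : α → Option α) : ℕ → α → Option α
  | 0, a => some a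
  | m + 1, a => (g a).bind (iterOpt g m)

/-! ### Weak compositions as functions `ℤ → ℕ` supported on positive integers -/

/-- A weak composition: nonnegative entries indexed by positive integers, finitely supported. -/
def WeakCompF (α : ℤ → ℕ) : Prop :=
  (∀ i ≤ 0, α i = 0) ∧ ∃ N : ℤ, ∀ i, N ≤ i → α i = 0

/-- A partition: a weakly decreasing weak composition. -/
def IsPartitionFun (lam : ℤ → ℕ) : Prop :=
  WeakCompF lam ∧ ∀ i : ℤ, 1 ≤ i → lam (i + 1) ≤ lam i

/-- `lam` is the decreasing rearrangement `λ(α)` of `α`: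
it is a partition with the same part multiplicities. -/
def IsDecRearr (α lam : ℤ → ℕ) : Prop :=
  IsPartitionFun lam ∧ ∀ k : ℕ, 0 < k →
    {i : ℤ | 1 ≤ i ∧ k ≤ α i}.ncard = {i : ℤ | 1 ≤ i ∧ k ≤ lam i}.ncard

/-- The Young diagram of a partition function (1-indexed positions). -/
def YDiag (lam : ℤ → ℕ) : Set (ℤ × ℤ) :=
  {p | 1 ≤ p.1 ∧ 1 ≤ p.2 ∧ p.2 ≤ (lam p.1 : ℤ)}

/-- Symmetric partition: diagram invariant under transposition. -/
def SymmPartF (lam : ℤ → ℕ) : Prop :=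
  IsPartitionFun lam ∧ ∀ p : ℤ × ℤ, p ∈ YDiag lam ↔ (p.2, p.1) ∈ YDiag lam

/-- Skew-symmetric partition. -/
def SkewSymmPartF (lam : ℤ → ℕ) : Prop :=
  SymmPartF lam ∧ ∀ i : ℤ, (i, i) ∈ YDiag lam → (i + 1, i + 1) ∉ YDiag lam →
    (¬ ∃ mu : ℤ → ℕ, IsPartitionFun mu ∧ YDiag mu = YDiag lam ∪ {(i, i + 1)} ∧
        YDiag mu ≠ YDiag lam) ∧
    (¬ ∃ mu : ℤ → ℕ, IsPartitionFun mu ∧ YDiag mu = YDiag lam \ {(i, i + 1)} ∧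
        YDiag mu ≠ YDiag lam)

/-- The Demazure action of a simple transposition on weak compositions:
sort the entries in positions `i, i+1` into weakly increasing order. -/
def sComp (i : ℤ) (β : ℤ → ℕ) : ℤ → ℕ :=
  if β (i + 1) < β i then
    (fun j => if j = i then β (i + 1) else if j = i + 1 then β i else β j)
  else β

/-- The Demazure action of a word on a weak composition (rightmost letter acts first). -/
def demCompAct (l : List ℤ) (β : ℤ → ℕ) : ℤ → ℕ := l.foldr sComp β

/-- `u = u(α)`: the minimal-length permutation with `α = u ∘ λ(α)` under the Demazure action. -/
def IsUofAlpha (α lam : ℤ → ℕ) (u : Equiv.Perm ℤ) : Prop :=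
  u ∈ SinftySet ∧ (∃ l : List ℤ, IsReducedWord u l ∧ demCompAct l lam = α) ∧
  ∀ v ∈ SinftySet, (∃ l : List ℤ, IsReducedWord v l ∧ demCompAct l lam = α) → lenOf u ≤ lenOf v

/-! ### Isobaric divided differences, Schubert polynomials -/

/-- `g = π_i f`, i.e. `(x_i - x_{i+1}) g = x_i f - x_{i+1} (s_i f)`. -/
def IsPiApply (i : ℤ) (f g : MvPolynomial ℤ ℤ) : Prop :=
  (X i - X (i + 1)) * g = X i * f - X (i + 1) * MvPolynomial.rename (sT i) f

/-- `g = π_{i_1} π_{i_2} ⋯ π_{i_k} f` for the word `l = [i_1, …, i_k]`. -/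
inductive IsPiWord : List ℤ → MvPolynomial ℤ ℤ → MvPolynomial ℤ ℤ → Prop
  | nil (f : MvPolynomial ℤ ℤ) : IsPiWord [] f f
  | cons (i : ℤ) (t : List ℤ) (f h g : MvPolynomial ℤ ℤ) :
      IsPiWord t f h → IsPiApply i h g → IsPiWord (i :: t) f g

/-- The dominant monomial `x^λ = ∏_{k=1}^{M} x_k^{λ_k}`. -/
noncomputable def xpow (lam : ℤ → ℕ) (M : ℕ) : MvPolynomial ℤ ℤ :=
  ∏ k ∈ Finset.range M, (X ((k : ℤ) + 1) : MvPolynomial ℤ ℤ) ^ lam ((k : ℤ) + 1)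

/-- The defining axioms of the family of Schubert polynomials `{𝔖_w}_{w ∈ S_∞}`:
`𝔖_w = x^λ` for `w` dominant of shape `λ`, and
`∂_i 𝔖_w = 𝔖_{w s_i}` whenever `w(i) > w(i+1)` (cleared of denominators). -/
def IsSchubertFamily (Sf : Equiv.Perm ℤ → MvPolynomial ℤ ℤ) : Prop :=
  (∀ w ∈ SinftySet, ∀ lam : ℤ → ℕ, IsPartitionFun lam → RotheD w = YDiag lam →
     ∀ M : ℕ, (∀ i : ℤ, (M : ℤ) < i → lam i = 0) → Sf w = xpow lam M) ∧
  (∀ w ∈ SinftySet, ∀ i : ℤ, 1 ≤ i → w (i + 1) < w i →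
     (X i - X (i + 1)) * Sf (w * sT i) = Sf w - MvPolynomial.rename (sT i) (Sf w))

/-- Substituting `x_m = 0` for all `m > n` in a polynomial. -/
noncomputable def restrictVars (n : ℕ) (g : MvPolynomial ℤ ℤ) : MvPolynomial ℤ ℤ :=
  (MvPolynomial.aeval fun m : ℤ => if m ≤ (n : ℤ) then (X m : MvPolynomial ℤ ℤ) else 0) g

/-! ### Queer crystal operators `ē_1`, `f̄_1`, `σ_i` on symplectic factorizations -/

/-- Insert a letter directly after the first letter of a list. -/
def insertAfterFirst (c : ℤ) : List ℤ → List ℤ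
  | [] => [c]
  | x :: t => x :: c :: t

/-- The operator `ē_1` on symplectic reduced factorizations. -/
def e1barOp (a : ℕ → List ℤ) : Option (ℕ → List ℤ) :=
  match a 1 with
  | [] => none
  | y :: s =>
    if ∀ x ∈ a 0, x < y then
      if Even y then
        some (Function.update (Function.update a 1 s) 0 (y :: a 0))
      else
        some (Function.update (Function.update a 1 s) 0 (insertAfterFirst (y - 2) (a 0)))
    else none

/-- The operator `f̄_1` on symplectic reduced factorizations. -/
def f1barOp (a : ℕ → List ℤ) : Option (ℕ → List ℤ) :=
  match a 0 with
  | [] => none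
  | x :: _ =>
    if ∀ y ∈ a 1, y < x then
      if (x - 1) ∈ a 0 then
        some (Function.update (Function.update a 0 ((a 0).erase (x - 1))) 1 ((x + 1) :: a 1))
      else
        some (Function.update (Function.update a 0 ((a 0).erase x)) 1 (x :: a 1))
    else none

/-- The string-reversing operator `σ` acting on factors `i, i+1` (0-indexed):
apply `f^k` where `k = wt_i - wt_{i+1}` if `k ≥ 0`, and `e^{-k}` otherwise. -/
def sigZ (i : ℕ) (a : ℕ → List ℤ) : Option (ℕ → List ℤ) :=
  if (a (i + 1)).length ≤ (a i).length then
    iterOpt (fZ i) ((a i).length - (a (i + 1)).length) a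
  else
    iterOpt (eZ i) ((a (i + 1)).length - (a i).length) a

/-- The operators `ē_{j+1}` (0-indexed `j`), defined by
`ē_i = σ_{i-1} σ_i ē_{i-1} σ_i σ_{i-1}`. -/
def ebarOp : ℕ → (ℕ → List ℤ) → Option (ℕ → List ℤ)
  | 0 => e1barOp
  | j + 1 => fun a =>
      (sigZ j a).bind fun b => (sigZ (j + 1) b).bind fun c =>
        (ebarOp j c).bind fun d => (sigZ (j + 1) d).bind (sigZ j)

/-- The operators `f̄_{j+1}` (0-indexed `j`). -/
def fbarOp : ℕ → (ℕ → List ℤ) → Option (ℕ → List ℤ)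
  | 0 => f1barOp
  | j + 1 => fun a =>
      (sigZ j a).bind fun b => (sigZ (j + 1) b).bind fun c =>
        (fbarOp j c).bind fun d => (sigZ (j + 1) d).bind (sigZ j)

/-! ### Crystal Demazure operators on symplectic factorizations -/

/-- The crystal Demazure operator `𝔇_i` (paper-indexed `i ∈ [n-1]`) inside the ambient
crystal `RF^Sp_n(z)`:  all `b` with `e_i^m(b) ∈ X` for some `m ∈ ℕ`. -/
def DOpSp (n : ℕ) (z : Equiv.Perm ℤ) (i : ℤ) (Xs : Set (ℕ → List ℤ)) : Set (ℕ → List ℤ) :=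
  {b | b ∈ RFSp n z ∧ ∃ m : ℕ, ∃ b', iterOpt (eZ (i - 1).toNat) m b = some b' ∧ b' ∈ Xs}

/-- `𝔇_{i_1} 𝔇_{i_2} ⋯ 𝔇_{i_k} X` for the word `l = [i_1, …, i_k]`. -/
def DemFoldSp (n : ℕ) (z : Equiv.Perm ℤ) (l : List ℤ) (Xs : Set (ℕ → List ℤ)) :
    Set (ℕ → List ℤ) :=
  l.foldr (fun i Y => DOpSp n z i Y) Xs

/-!
Edelman–Greene insertion shows that every reduced word is Coxeter–Knuth equivalent to the row
reading word of an increasing tableau (Coxeter–Knuth moves preserve the product and the length, so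
the reading word is again reduced). Reversing words, it suffices to show that `T_λ` is the only
increasing tableau `T` with `revrow T ∈ R(w_λ)`.

Since `w_λ` fixes everything `≤ 0` and `w_λ(1) = λ₁ + 1`, the letters of the first row of such a
`T` are `≥ 1`, the last one is a descent of `w_λ` and hence `≤ λ₁`, the lower rows (whose letters
are `≥ 2`) fix `1`, and the reversed first row must carry `1` to `λ₁ + 1`; this forces the first row
to be `1, 2, …, λ₁`. Removing it multiplies `w_λ` by the cycle `s₁ ⋯ s_{λ₁}`, which gives the
dominant permutation of the remaining shape moved one step down the diagonal, so induction on the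
number of rows applies.
-/

/-! ### Reduced words and inversions -/

lemma sT_apply (i x : ℤ) : sT i x = if x = i then i + 1 else if x = i + 1 then i else x :=
  Equiv.swap_apply_def i (i + 1) x

@[simp] lemma sT_mul_self (i : ℤ) : sT i * sT i = 1 := Equiv.swap_mul_self i (i + 1)

@[simp] lemma sT_inv (i : ℤ) : (sT i)⁻¹ = sT i := Equiv.swap_inv i (i + 1)

lemma sT_comm {a c : ℤ} (h : a + 2 ≤ c) : sT a * sT c = sT c * sT a := by
  ext x
  simp only [Equiv.Perm.mul_apply, sT_apply]
  split_ifs <;> omega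

lemma sT_braid (a : ℤ) : sT a * sT (a + 1) * sT a = sT (a + 1) * sT a * sT (a + 1) := by
  ext x
  simp only [Equiv.Perm.mul_apply, sT_apply]
  split_ifs <;> omega

@[simp] lemma wordProd_nil : wordProd [] = 1 := rfl

@[simp] lemma wordProd_cons (x : ℤ) (l : List ℤ) : wordProd (x :: l) = sT x * wordProd l := by
  simp [wordProd]

@[simp] lemma wordProd_append (a b : List ℤ) : wordProd (a ++ b) = wordProd a * wordProd b := by
  simp [wordProd]

@[simp] lemma wordProd_reverse (l : List ℤ) : wordProd l.reverse = (wordProd l)⁻¹ := by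
  induction l with
  | nil => simp
  | cons x t ih => simp [ih]

lemma sT_mul_wordProd_comm {t : List ℤ} {x : ℤ} (h : ∀ e ∈ t, x + 2 ≤ e) :
    sT x * wordProd t = wordProd t * sT x := by
  induction t with
  | nil => simp
  | cons e s ih =>
    simp only [List.forall_mem_cons] at h
    rw [wordProd_cons, ← mul_assoc, sT_comm h.1, mul_assoc, ih h.2, mul_assoc]

def FixesLE (u : Equiv.Perm ℤ) (t : ℤ) : Prop := ∀ x ≤ t, u x = x

namespace FixesLE

variable {u : Equiv.Perm ℤ} {t : ℤ}

lemma inv (h : FixesLE u t) : FixesLE u⁻¹ t := fun x hx => by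
  rw [Equiv.Perm.inv_eq_iff_eq, h x hx]

lemma lt_apply (h : FixesLE u t) {x : ℤ} (hx : t < x) : t < u x := by
  by_contra! hle
  have := h.inv _ hle
  simp at this
  omega

lemma mono (h : FixesLE u t) {s : ℤ} (hst : s ≤ t) : FixesLE u s := fun x hx => h x (hx.trans hst)

lemma sT_mul (h : FixesLE u t) {x : ℤ} (hx : t < x) : FixesLE (sT x * u) t := fun y hy => by
  rw [Equiv.Perm.mul_apply, h y hy, sT_apply]
  split_ifs <;> omega

end FixesLE

lemma fixesLE_one (t : ℤ) : FixesLE 1 t := fun _ _ => rfl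

lemma fixesLE_wordProd {l : List ℤ} {t : ℤ} (h : ∀ i ∈ l, t < i) : FixesLE (wordProd l) t := by
  induction l with
  | nil => exact fixesLE_one t
  | cons x m ih =>
    simp only [List.forall_mem_cons] at h
    exact (ih h.2).sT_mul h.1

lemma exists_fixesLE_wordProd (l : List ℤ) : ∃ t, FixesLE (wordProd l) t := by
  induction l with
  | nil => exact ⟨0, fixesLE_one 0⟩
  | cons x m ih =>
    obtain ⟨t, ht⟩ := ih
    exact ⟨min t (x - 1), ((ht.mono (min_le_left _ _)).sT_mul (by omega))⟩

/-- Left multiplication by `s_x` only changes the relative order of the positions `u⁻¹ x` and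
`u⁻¹ (x + 1)`. -/
lemma invSet_sT_mul_of_lt {u : Equiv.Perm ℤ} {x : ℤ} (h : u⁻¹ x < u⁻¹ (x + 1)) :
    InvSet (sT x * u) = insert (u⁻¹ x, u⁻¹ (x + 1)) (InvSet u) := by
  ext ⟨a, b⟩
  have hx {c y : ℤ} : c = u⁻¹ y ↔ u c = y := Equiv.Perm.eq_inv_iff_eq
  have hinj : u a = u b → a = b := fun e => u.injective e
  have hxa : u a = x → a = u⁻¹ x := hx.2
  have hxb : u b = x → b = u⁻¹ x := hx.2
  have hya : u a = x + 1 → a = u⁻¹ (x + 1) := hx.2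
  have hyb : u b = x + 1 → b = u⁻¹ (x + 1) := hx.2
  simp only [InvSet, Set.mem_insert_iff, Set.mem_ofPred_eq, Prod.mk.injEq, Equiv.Perm.mul_apply,
    sT_apply, hx]
  split_ifs <;> omega

lemma inv_pair_not_mem_invSet {u : Equiv.Perm ℤ} {x : ℤ} :
    (u⁻¹ x, u⁻¹ (x + 1)) ∉ InvSet u := fun h => by
  simp [InvSet] at h

lemma invSet_one : InvSet 1 = ∅ := by
  ext p
  simp only [InvSet, Equiv.Perm.one_apply, Set.mem_ofPred_eq, Set.mem_empty_iff_false, iff_false]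
  omega

lemma inv_lt_or_gt (u : Equiv.Perm ℤ) (x : ℤ) : u⁻¹ x < u⁻¹ (x + 1) ∨ u⁻¹ (x + 1) < u⁻¹ x :=
  lt_or_gt_of_ne fun h => by simpa using u⁻¹.injective h

lemma invSet_eq_insert_of_gt {u : Equiv.Perm ℤ} {x : ℤ} (h : u⁻¹ (x + 1) < u⁻¹ x) :
    InvSet u = insert (u⁻¹ (x + 1), u⁻¹ x) (InvSet (sT x * u)) := by
  have := invSet_sT_mul_of_lt (u := sT x * u) (x := x) (by simpa [sT_apply] using h)
  simpa [← mul_assoc, sT_apply] using this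

lemma ncard_invSet_sT_mul_of_lt {u : Equiv.Perm ℤ} {x : ℤ} (hfin : (InvSet u).Finite)
    (h : u⁻¹ x < u⁻¹ (x + 1)) : (InvSet (sT x * u)).ncard = (InvSet u).ncard + 1 := by
  rw [invSet_sT_mul_of_lt h, Set.ncard_insert_of_notMem inv_pair_not_mem_invSet hfin]

lemma ncard_invSet_of_gt {u : Equiv.Perm ℤ} {x : ℤ} (hfin : (InvSet u).Finite)
    (h : u⁻¹ (x + 1) < u⁻¹ x) :
    (InvSet (sT x * u)).Finite ∧ (InvSet u).ncard = (InvSet (sT x * u)).ncard + 1 := by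
  have hins := invSet_eq_insert_of_gt h
  have hfin' : (InvSet (sT x * u)).Finite := hfin.subset (hins ▸ Set.subset_insert _ _)
  have hnot : (u⁻¹ (x + 1), u⁻¹ x) ∉ InvSet (sT x * u) := by
    simpa [sT_apply] using inv_pair_not_mem_invSet (u := sT x * u) (x := x)
  exact ⟨hfin', by rw [hins, Set.ncard_insert_of_notMem hnot hfin']⟩

lemma invSet_wordProd_finite (l : List ℤ) : (InvSet (wordProd l)).Finite := by
  induction l with
  | nil => simp [invSet_one]
  | cons x m ih =>
    rw [wordProd_cons]
    rcases inv_lt_or_gt (wordProd m) x with h | h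
    · rw [invSet_sT_mul_of_lt h]
      exact ih.insert _
    · exact (ncard_invSet_of_gt ih h).1

lemma ncard_invSet_wordProd_le (l : List ℤ) : (InvSet (wordProd l)).ncard ≤ l.length := by
  induction l with
  | nil => simp [invSet_one]
  | cons x m ih =>
    have hfin := invSet_wordProd_finite m
    rw [wordProd_cons, List.length_cons]
    rcases inv_lt_or_gt (wordProd m) x with h | h
    · rw [ncard_invSet_sT_mul_of_lt hfin h]
      omega
    · have := (ncard_invSet_of_gt hfin h).2
      omega

lemma eq_one_of_invSet_eq_empty {u : Equiv.Perm ℤ} {t : ℤ} (hfix : FixesLE u t)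
    (h : InvSet u = ∅) : u = 1 := by
  have hstep (s : ℤ) (hs : FixesLE u s) : FixesLE u (s + 1) := by
    intro y hy
    rcases le_or_gt y s with hys | hys
    · exact hs y hys
    have hlt : s < u y := hs.lt_apply hys
    have hlt' : s < u⁻¹ y := hs.inv.lt_apply hys
    have hnot : (y, u⁻¹ y) ∉ InvSet u := h ▸ Set.notMem_empty _
    simp only [InvSet, Set.mem_ofPred_eq, not_and, not_lt] at hnot
    -- if `u y ≠ y` then `u⁻¹ y > y`, and `(y, u⁻¹ y)` would be an inversion
    by_contra hne
    have hne' : u⁻¹ y ≠ y := fun e => hne (Equiv.Perm.inv_eq_iff_eq.1 e).symm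
    have := hnot (by omega)
    simp at this
    omega
  have hall (s : ℤ) (hs : t ≤ s) : FixesLE u s :=
    Int.leInduction (motive := fun s _ => FixesLE u s) hfix (fun s _ => hstep s) s hs
  ext x
  exact hall (max t x) (le_max_left _ _) x (le_max_right _ _)

lemma exists_descent_of_invSet_nonempty {u : Equiv.Perm ℤ} (h : (InvSet u).Nonempty) :
    ∃ x, u⁻¹ (x + 1) < u⁻¹ x := by
  by_contra! hasc
  have hmono : StrictMono ⇑u⁻¹ := strictMono_int_of_lt_succ fun x =>
    ((inv_lt_or_gt u x).resolve_right (hasc x).not_gt)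
  obtain ⟨⟨a, b⟩, hab, hba⟩ := h
  have := hmono hba
  simp at this
  omega

lemma FixesLE.exists_wordProd_eq {u : Equiv.Perm ℤ} {t : ℤ} (hfix : FixesLE u t)
    (hfin : (InvSet u).Finite) : ∃ l, wordProd l = u ∧ l.length = (InvSet u).ncard := by
  generalize hn : (InvSet u).ncard = n
  induction n generalizing u t with
  | zero => exact ⟨[], (eq_one_of_invSet_eq_empty hfix ((Set.ncard_eq_zero hfin).1 hn)).symm, rfl⟩
  | succ n ih =>
    obtain ⟨x, hx⟩ := exists_descent_of_invSet_nonempty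
      (Set.nonempty_of_ncard_ne_zero (by omega : (InvSet u).ncard ≠ 0))
    obtain ⟨hfin', hcard⟩ := ncard_invSet_of_gt hfin hx
    obtain ⟨m, hm, hlen⟩ :=
      ih ((hfix.mono (min_le_left t (x - 1))).sT_mul (by omega)) hfin' (by omega)
    exact ⟨x :: m, by simp [hm, ← mul_assoc], by simp [hlen]⟩

lemma exists_wordProd_eq_length_eq_ncard {u : Equiv.Perm ℤ} {l₀ : List ℤ}
    (h₀ : wordProd l₀ = u) : ∃ l, wordProd l = u ∧ l.length = (InvSet u).ncard := by
  obtain ⟨t, ht⟩ := exists_fixesLE_wordProd l₀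
  subst h₀
  exact ht.exists_wordProd_eq (invSet_wordProd_finite l₀)

lemma isReducedWord_iff {u : Equiv.Perm ℤ} {l₀ : List ℤ} (h₀ : wordProd l₀ = u) (l : List ℤ) :
    IsReducedWord u l ↔ wordProd l = u ∧ l.length = (InvSet u).ncard := by
  obtain ⟨lr, hlr, hlen⟩ := exists_wordProd_eq_length_eq_ncard h₀
  refine ⟨fun h => ⟨h.1, le_antisymm (hlen ▸ h.2 lr hlr) (h.1 ▸ ncard_invSet_wordProd_le l)⟩,
    fun h => ⟨h.1, fun m hm => h.2 ▸ hm ▸ ncard_invSet_wordProd_le m⟩⟩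

lemma exists_isReducedWord {u : Equiv.Perm ℤ} {l₀ : List ℤ} (h₀ : wordProd l₀ = u) :
    ∃ l, IsReducedWord u l := by
  obtain ⟨l, hl, hlen⟩ := exists_wordProd_eq_length_eq_ncard h₀
  exact ⟨l, (isReducedWord_iff h₀ l).2 ⟨hl, hlen⟩⟩

namespace IsReducedWord

variable {u : Equiv.Perm ℤ} {l : List ℤ}

lemma isReducedWord_wordProd (h : IsReducedWord u l) : IsReducedWord (wordProd l) l :=
  h.1 ▸ h

lemma eq_nil_of_one (h : IsReducedWord 1 l) : l = [] :=
  List.eq_nil_of_length_eq_zero (Nat.le_zero.1 (h.2 [] rfl))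

lemma append {p s : List ℤ} (h : IsReducedWord u (p ++ s)) :
    IsReducedWord (wordProd p) p ∧ IsReducedWord (wordProd s) s := by
  have hps : wordProd p * wordProd s = u := by rw [← wordProd_append, h.1]
  refine ⟨⟨rfl, fun m hm => ?_⟩, ⟨rfl, fun m hm => ?_⟩⟩
  · have := h.2 (m ++ s) (by rw [wordProd_append, hm, hps])
    simp only [List.length_append] at this
    omega
  · have := h.2 (p ++ m) (by rw [wordProd_append, hm, hps])
    simp only [List.length_append] at this
    omega

lemma of_append {p s : List ℤ} (h : IsReducedWord u (p ++ s)) :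
    IsReducedWord ((wordProd p)⁻¹ * u) s := by
  rw [← h.1, wordProd_append, inv_mul_cancel_left]
  exact h.append.2

lemma reverse (h : IsReducedWord u l) : IsReducedWord u⁻¹ l.reverse :=
  ⟨by rw [wordProd_reverse, h.1], fun m hm => by
    simpa using h.2 m.reverse (by rw [wordProd_reverse, hm, inv_inv])⟩

lemma descent {x : ℤ} {m : List ℤ} (h : IsReducedWord u (x :: m)) : u⁻¹ (x + 1) < u⁻¹ x := by
  have hlen := ((isReducedWord_iff h.1 _).1 h).2
  have hm : wordProd m = sT x * u := by
    rw [← h.1, wordProd_cons, ← mul_assoc, sT_mul_self, one_mul]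
  refine (inv_lt_or_gt u x).resolve_left fun hasc => ?_
  have := ncard_invSet_sT_mul_of_lt (h.1 ▸ invSet_wordProd_finite _) hasc
  have := hm ▸ ncard_invSet_wordProd_le m
  simp only [List.length_cons] at hlen
  omega

lemma lt_of_mem {t : ℤ} (hfix : FixesLE u t) (h : IsReducedWord u l) : ∀ i ∈ l, t < i := by
  induction l generalizing u with
  | nil => simp
  | cons x m ih =>
    have hdesc := h.descent
    have hx : t < x := by
      by_contra! hxt
      have h1 := hfix.inv x hxt
      rcases hxt.lt_or_eq with hxt | rfl
      · have := hfix.inv (x + 1) hxt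
        omega
      · have := hfix.inv.lt_apply (lt_add_one x)
        omega
    have htail : IsReducedWord (sT x * u) m := by simpa using h.of_append (p := [x])
    exact List.forall_mem_cons.2 ⟨hx, ih (hfix.sT_mul hx) htail⟩

end IsReducedWord

/-! ### Coxeter–Knuth equivalence -/

namespace CKStep

variable {a b : List ℤ}

lemma wordProd_eq (h : CKStep a b) : wordProd a = wordProd b := by
  cases h with
  | @acb u v a _ c h1 h2 => simp [← mul_assoc, sT_comm (show a + 2 ≤ c by omega)]
  | @bca u v a _ c h1 h2 => simp [← mul_assoc, sT_comm (show a + 2 ≤ c by omega)]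
  | @braid u v a _ hb =>
    have hbraid := sT_braid (a - 1)
    rw [sub_add_cancel] at hbraid
    rcases hb with rfl | rfl
    · simpa [mul_assoc] using congr(wordProd u * $(sT_braid a) * wordProd v)
    · simpa [mul_assoc] using congr(wordProd u * $(Eq.symm hbraid) * wordProd v)

lemma length_eq (h : CKStep a b) : a.length = b.length := by
  cases h <;> simp

lemma append (h : CKStep a b) (u v : List ℤ) : CKStep (u ++ a ++ v) (u ++ b ++ v) := by
  cases h with
  | acb u' v' h1 h2 => simpa using CKStep.acb (u ++ u') (v' ++ v) h1 h2
  | bca u' v' h1 h2 => simpa using CKStep.bca (u ++ u') (v' ++ v) h1 h2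
  | braid u' v' hb => simpa using CKStep.braid (u ++ u') (v' ++ v) hb

lemma reverse (h : CKStep a b) : CKStep a.reverse b.reverse := by
  cases h with
  | acb u v h1 h2 => simpa using CKStep.bca v.reverse u.reverse h1 h2
  | bca u v h1 h2 => simpa using CKStep.acb v.reverse u.reverse h1 h2
  | braid u v hb => simpa using CKStep.braid v.reverse u.reverse hb

end CKStep

namespace CKEquiv

variable {a b c : List ℤ}

lemma refl (a : List ℤ) : CKEquiv a a := Relation.EqvGen.refl a

lemma symm (h : CKEquiv a b) : CKEquiv b a := Relation.EqvGen.symm _ _ h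

lemma trans (h₁ : CKEquiv a b) (h₂ : CKEquiv b c) : CKEquiv a c :=
  Relation.EqvGen.trans _ _ _ h₁ h₂

instance : Trans CKEquiv CKEquiv CKEquiv := ⟨trans⟩

lemma of_step (h : CKStep a b) : CKEquiv a b := Relation.EqvGen.rel _ _ h

lemma map {f : List ℤ → List ℤ} (hf : ∀ a b, CKStep a b → CKStep (f a) (f b))
    (h : CKEquiv a b) : CKEquiv (f a) (f b) := by
  induction h with
  | rel x y hxy => exact of_step (hf x y hxy)
  | refl x => exact refl _
  | symm x y _ ih => exact ih.symm
  | trans x y z _ _ ih₁ ih₂ => exact ih₁.trans ih₂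

lemma eq_of_invariant {α : Type*} {f : List ℤ → α} (hf : ∀ a b, CKStep a b → f a = f b)
    (h : CKEquiv a b) : f a = f b := by
  induction h with
  | rel x y hxy => exact hf x y hxy
  | refl x => rfl
  | symm x y _ ih => exact ih.symm
  | trans x y z _ _ ih₁ ih₂ => exact ih₁.trans ih₂

lemma append (h : CKEquiv a b) (u v : List ℤ) : CKEquiv (u ++ a ++ v) (u ++ b ++ v) :=
  h.map fun _ _ hxy => hxy.append u v

lemma append_left (h : CKEquiv a b) (u : List ℤ) : CKEquiv (u ++ a) (u ++ b) := by
  simpa using h.append u []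

lemma append_right (h : CKEquiv a b) (v : List ℤ) : CKEquiv (a ++ v) (b ++ v) := by
  simpa using h.append [] v

lemma reverse (h : CKEquiv a b) : CKEquiv a.reverse b.reverse :=
  h.map fun _ _ hxy => hxy.reverse

lemma wordProd_eq (h : CKEquiv a b) : wordProd a = wordProd b :=
  h.eq_of_invariant fun _ _ => CKStep.wordProd_eq

lemma length_eq (h : CKEquiv a b) : a.length = b.length :=
  h.eq_of_invariant fun _ _ => CKStep.length_eq

end CKEquiv

lemma IsReducedWord.of_ckEquiv {u : Equiv.Perm ℤ} {a b : List ℤ} (ha : IsReducedWord u a)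
    (h : CKEquiv a b) : IsReducedWord u b :=
  ⟨h.wordProd_eq ▸ ha.1, h.length_eq ▸ ha.2⟩

/-! ### Edelman–Greene insertion -/

lemma ckEquiv_cons_append_singleton {p x : ℤ} {t : List ℤ} (hxp : x < p) (hpt : ∀ e ∈ t, p < e)
    (ht : t.Pairwise (· < ·)) : CKEquiv (p :: t ++ [x]) (p :: x :: t) := by
  induction t generalizing p with
  | nil => exact CKEquiv.refl _
  | cons e s ih =>
    simp only [List.forall_mem_cons, List.pairwise_cons] at hpt ht
    calc p :: e :: s ++ [x] = [p] ++ (e :: s ++ [x]) := rfl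
      CKEquiv _ ([p] ++ (e :: x :: s)) := (ih (hxp.trans hpt.1) ht.1 ht.2).append_left [p]
      CKEquiv _ (p :: x :: e :: s) := CKEquiv.of_step (CKStep.bca [] s hxp hpt.1)

lemma ckEquiv_append_cons_cons {c y : ℤ} {A rest : List ℤ} (hA : A.Pairwise (· < ·))
    (hAc : ∀ a ∈ A, a < c) (hcy : c < y) :
    CKEquiv (A ++ y :: c :: rest) (y :: (A ++ c :: rest)) := by
  induction A using List.reverseRecOn generalizing c rest with
  | nil => exact CKEquiv.refl _
  | append_singleton A a ih =>
    simp only [List.pairwise_append, List.pairwise_singleton, List.mem_singleton, forall_eq,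
      true_and] at hA
    have hac : a < c := hAc a (by simp)
    calc A ++ [a] ++ y :: c :: rest = A ++ a :: y :: c :: rest := by simp
      CKEquiv _ (A ++ y :: a :: c :: rest) := CKEquiv.of_step (CKStep.acb A rest hac hcy)
      CKEquiv _ (y :: (A ++ a :: c :: rest)) := ih hA.1 hA.2 (hac.trans hcy)
      _ = y :: (A ++ [a] ++ c :: rest) := by simp

/-- Edelman–Greene row insertion of `x` into an increasing row: `x` takes the place of the first
entry `b ≥ x`, or is appended if there is none. -/
def rowInsert (r : List ℤ) (x : ℤ) : List ℤ :=
  r.takeWhile (· < x) ++ x :: (r.dropWhile (· < x)).tail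

/-- The letter bumped to the next row by `rowInsert r x`: the entry `b` that `x` replaces, except
that `x + 1` is bumped when `b = x` (and the row is then unchanged). -/
def rowBump (r : List ℤ) (x : ℤ) : Option ℤ :=
  (r.dropWhile (· < x)).head?.map fun b => if b = x then x + 1 else b

/-- Edelman–Greene insertion into a tableau given by its rows, top row first. -/
def insertT : List (List ℤ) → ℤ → List (List ℤ)
  | [], x => [[x]]
  | r :: rest, x => rowInsert r x :: (rowBump r x).elim rest (insertT rest)

lemma rowInsert_spec {r : List ℤ} (hr : r.Pairwise (· < ·)) (x : ℤ) :
    ∃ A B, r = A ++ B ∧ (∀ a ∈ A, a < x) ∧ (∀ b ∈ B, x ≤ b) ∧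
      rowInsert r x = A ++ x :: B.tail ∧
      rowBump r x = B.head?.map fun b => if b = x then x + 1 else b := by
  refine ⟨_, _, List.takeWhile_append_dropWhile.symm, fun a ha => by
    simpa using List.mem_takeWhile_imp ha, ?_, rfl, rfl⟩
  rcases hB : r.dropWhile (· < x) with _ | ⟨b, B⟩
  · simp
  have hbx : x ≤ b := by
    simpa [hB] using List.head_dropWhile_not (fun e => decide (e < x)) (l := r) (by simp [hB])
  have hsorted : (b :: B).Pairwise (· < ·) := by
    rw [← hB]
    rw [← List.takeWhile_append_dropWhile (p := (· < x)) (l := r)] at hr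
    exact (List.pairwise_append.1 hr).2.1
  simp only [List.forall_mem_cons, List.pairwise_cons] at hsorted ⊢
  exact ⟨hbx, fun e he => (hbx.trans_lt (hsorted.1 e he)).le⟩

section rowInsert

variable {r : List ℤ} {x : ℤ}

lemma rowInsert_of_rowBump_eq_none (hr : r.Pairwise (· < ·)) (h : rowBump r x = none) :
    rowInsert r x = r ++ [x] := by
  obtain ⟨A, B, rfl, -, -, hins, hbump⟩ := rowInsert_spec hr x
  cases B with
  | nil => simpa using hins
  | cons b B => simp [h] at hbump

lemma rowBump_eq_some (hr : r.Pairwise (· < ·)) {y : ℤ} (h : rowBump r x = some y) :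
    ∃ A b B, r = A ++ b :: B ∧ (∀ a ∈ A, a < x) ∧ x ≤ b ∧ rowInsert r x = A ++ x :: B ∧
      y = if b = x then x + 1 else b := by
  obtain ⟨A, B, rfl, hA, hB, hins, hbump⟩ := rowInsert_spec hr x
  cases B with
  | nil => simp_all
  | cons b B =>
    simp only [h, List.head?_cons, Option.map_some, Option.some.injEq] at hbump
    exact ⟨A, b, B, rfl, hA, hB b (by simp), hins, hbump⟩

lemma pairwise_rowInsert (hr : r.Pairwise (· < ·)) : (rowInsert r x).Pairwise (· < ·) := by
  obtain ⟨A, B, rfl, hA, hB, hins, -⟩ := rowInsert_spec hr x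
  rw [hins, List.pairwise_append]
  rw [List.pairwise_append] at hr
  cases B with
  | nil => simpa using ⟨hr.1, hA⟩
  | cons b B =>
    simp only [List.pairwise_cons, List.mem_cons, forall_eq_or_imp, List.tail_cons] at hr hB ⊢
    exact ⟨hr.1, ⟨fun e he => hB.1.trans_lt (hr.2.1.1 e he), hr.2.1.2⟩,
      fun a ha => ⟨hA a ha, fun e he => (hr.2.2 a ha).2 e he⟩⟩

end rowInsert

lemma getD_append_cons_tail (A B : List ℤ) (x : ℤ) (i : ℕ) :
    (A ++ x :: B.tail).getD i 0 = if i = A.length then x else (A ++ B).getD i 0 := by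
  rcases lt_trichotomy i A.length with h | rfl | h
  · rw [List.getD_append _ _ _ _ h, List.getD_append _ _ _ _ h, if_neg h.ne]
  · simp
  · obtain ⟨k, rfl⟩ : ∃ k, i = A.length + 1 + k := ⟨i - A.length - 1, by omega⟩
    rw [if_neg (by omega), List.getD_append_right _ _ _ _ (by omega),
      List.getD_append_right _ _ _ _ (by omega), show A.length + 1 + k - A.length = k + 1 by omega]
    cases B <;> simp

lemma getD_lt_of_forall_lt {A : List ℤ} {x : ℤ} (hA : ∀ a ∈ A, a < x) {i : ℕ}
    (hi : i < A.length) : A.getD i 0 < x := by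
  rw [List.getD_eq_getElem _ _ hi]
  exact hA _ (List.getElem_mem hi)

/-- Row `h` may stand directly below row `r` in an increasing tableau. -/
def RowLt (r h : List ℤ) : Prop := h.length ≤ r.length ∧ ∀ i < h.length, r.getD i 0 < h.getD i 0

lemma rowLt_nil (r : List ℤ) : RowLt r [] :=
  ⟨Nat.zero_le _, fun _ hi => absurd hi (Nat.not_lt_zero _)⟩

lemma RowLt.trans {a b c : List ℤ} (hab : RowLt a b) (hbc : RowLt b c) : RowLt a c :=
  ⟨hbc.1.trans hab.1, fun i hi => (hab.2 i (hi.trans_le hbc.1)).trans (hbc.2 i hi)⟩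

lemma RowLt.append_singleton {r h : List ℤ} (hrh : RowLt r h) (x : ℤ) : RowLt (r ++ [x]) h :=
  ⟨by simpa using hrh.1.trans (Nat.le_succ _), fun i hi => by
    rw [List.getD_append _ _ _ _ (hi.trans_le hrh.1)]
    exact hrh.2 i hi⟩

/-- The bumped letter enters the next row weakly to the left of the column it left, so inserting
into two adjacent rows keeps them column strict. -/
lemma rowLt_rowInsert {r h : List ℤ} {x y : ℤ} (hr : r.Pairwise (· < ·))
    (hh : h.Pairwise (· < ·)) (hrh : RowLt r h) (hy : rowBump r x = some y) :
    RowLt (rowInsert r x) (rowInsert h y) := by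
  obtain ⟨A, b, B, rfl, hA, hxb, hr', rfl⟩ := rowBump_eq_some hr hy
  obtain ⟨C, D, rfl, hC, -, hinsh, -⟩ := rowInsert_spec hh (if b = x then x + 1 else b)
  have hxy : x < if b = x then x + 1 else b := by split_ifs <;> omega
  have hby : (if b = x then x + 1 else b) ≤ b + 1 := by split_ifs <;> omega
  generalize (if b = x then x + 1 else b) = y at *
  have hins : rowInsert (A ++ b :: B) x = A ++ x :: (b :: B).tail := hr'
  obtain ⟨hlen, hlt⟩ := hrh
  simp only [List.length_append, List.length_cons] at hlen hlt
  have hrb : (A ++ b :: B).getD A.length 0 = b := by simp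
  have hCA : C.length ≤ A.length := by
    by_contra! hAC
    have := hlt A.length (by omega)
    rw [hrb, List.getD_append _ _ _ _ hAC] at this
    have := getD_lt_of_forall_lt hC hAC
    omega
  refine ⟨?_, fun i hi => ?_⟩
  · simp only [hins, hinsh, List.length_append, List.length_cons, List.length_tail]
    omega
  simp only [hinsh, List.length_append, List.length_cons, List.length_tail] at hi
  rw [hins, hinsh, getD_append_cons_tail, getD_append_cons_tail]
  split_ifs with hiA hiC hiC
  · exact hxy
  · subst hiA
    have := hlt A.length (by omega)
    rw [hrb] at this
    omega
  · rw [List.getD_append _ _ _ _ (by omega)]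
    exact (getD_lt_of_forall_lt hA (by omega)).trans hxy
  · exact hlt i (by omega)

lemma incrTab_iff {T : List (List ℤ)} :
    IncrTab T ↔ (∀ r ∈ T, r ≠ [] ∧ r.Pairwise (· < ·)) ∧ T.IsChain RowLt := by
  have hchain : T.IsChain RowLt ↔
      ∀ i, i + 1 < T.length → RowLt (T.getD i []) (T.getD (i + 1) []) := by
    rw [List.isChain_iff_getElem]
    refine forall_congr' fun i => forall_congr' fun hi => ?_
    rw [List.getD_eq_getElem _ _ hi, List.getD_eq_getElem _ _ (Nat.lt_of_succ_lt hi)]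
  rw [hchain]
  simp only [IncrTab, IsPartShape, RowLt, entryOf]
  constructor
  · rintro ⟨⟨hne, hlen⟩, hsort, hcol⟩
    exact ⟨fun r hr => ⟨hne r hr, hsort r hr⟩, fun i hi => ⟨hlen i hi, (hcol i · hi)⟩⟩
  · rintro ⟨hrows, hrel⟩
    exact ⟨⟨fun r hr => (hrows r hr).1, fun i hi => (hrel i hi).1⟩, fun r hr => (hrows r hr).2,
      fun i j hi hj => (hrel i hi).2 j hj⟩

lemma incrTab_nil : IncrTab [] := incrTab_iff.2 ⟨by simp, List.isChain_nil⟩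

lemma incrTab_cons_iff {r : List ℤ} {rest : List (List ℤ)} :
    IncrTab (r :: rest) ↔
      (r ≠ [] ∧ r.Pairwise (· < ·)) ∧ RowLt r (rest.headD []) ∧ IncrTab rest := by
  simp only [incrTab_iff, List.forall_mem_cons, List.isChain_cons]
  cases rest <;> simp [rowLt_nil]; tauto

lemma insertT_cons (r : List ℤ) (rest : List (List ℤ)) (x : ℤ) :
    insertT (r :: rest) x = rowInsert r x :: (rowBump r x).elim rest (insertT rest) := rfl

lemma headD_insertT (T : List (List ℤ)) (y : ℤ) :
    (insertT T y).headD [] = rowInsert (T.headD []) y := by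
  cases T <;> rfl

lemma incrTab_insertT {T : List (List ℤ)} (hT : IncrTab T) (x : ℤ) : IncrTab (insertT T x) := by
  induction T generalizing x with
  | nil => exact incrTab_cons_iff.2 ⟨⟨by simp, by simp⟩, rowLt_nil _, incrTab_nil⟩
  | cons r rest ih =>
    obtain ⟨⟨-, hr⟩, hrh, hrest⟩ := incrTab_cons_iff.1 hT
    have hhead : (rest.headD []).Pairwise (· < ·) := by
      cases rest with
      | nil => simp
      | cons h _ => exact (incrTab_cons_iff.1 hrest).1.2
    rw [insertT_cons]
    refine incrTab_cons_iff.2 ⟨⟨by simp [rowInsert], pairwise_rowInsert hr⟩, ?_⟩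
    rcases hb : rowBump r x with _ | y
    · rw [rowInsert_of_rowBump_eq_none hr hb]
      exact ⟨hrh.append_singleton x, hrest⟩
    · refine ⟨?_, ih hrest y⟩
      change RowLt _ ((insertT rest y).headD [])
      rw [headD_insertT]
      exact rowLt_rowInsert hr hhead hrh hb

lemma not_isReducedWord_append_cons {A B : List ℤ} {x : ℤ} (hB : ∀ e ∈ B, x + 2 ≤ e) :
    ¬ IsReducedWord (wordProd (A ++ x :: B ++ [x])) (A ++ x :: B ++ [x]) := fun h => by
  have := h.2 (A ++ B) (by
    simp only [wordProd_append, wordProd_cons, wordProd_nil, mul_one, mul_assoc,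
      sT_mul_wordProd_comm hB, sT_mul_self])
  simp at this

lemma ckEquiv_rowInsert {r : List ℤ} {x y : ℤ} (hr : r.Pairwise (· < ·))
    (hred : IsReducedWord (wordProd (r ++ [x])) (r ++ [x])) (hy : rowBump r x = some y) :
    CKEquiv (r ++ [x]) (y :: rowInsert r x) := by
  obtain ⟨A, b, B, rfl, hA, hxb, hins, rfl⟩ := rowBump_eq_some hr hy
  rw [hins]
  simp only [List.pairwise_append, List.pairwise_cons, List.mem_cons, forall_eq_or_imp] at hr
  obtain ⟨hAs, ⟨hbB, hBs⟩, -⟩ := hr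
  split_ifs with hbx
  · subst hbx
    cases B with
    | nil => exact absurd hred (not_isReducedWord_append_cons (by simp))
    | cons c B =>
      simp only [List.pairwise_cons, List.mem_cons, forall_eq_or_imp] at hbB hBs
      by_cases hc : c = b + 1
      · subst hc
        calc A ++ b :: (b + 1) :: B ++ [b] = A ++ [b] ++ ((b + 1) :: B ++ [b]) := by simp
          CKEquiv _ (A ++ [b] ++ ((b + 1) :: b :: B)) :=
            (ckEquiv_cons_append_singleton (lt_add_one b) hBs.1 hBs.2).append_left _
          _ = A ++ b :: (b + 1) :: b :: B := by simp
          CKEquiv _ (A ++ (b + 1) :: b :: (b + 1) :: B) :=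
            CKEquiv.of_step (CKStep.braid A B (Or.inl rfl))
          CKEquiv _ ((b + 1) :: (A ++ b :: (b + 1) :: B)) :=
            ckEquiv_append_cons_cons hAs hA (lt_add_one b)
      · refine absurd hred (not_isReducedWord_append_cons ?_)
        simp only [List.mem_cons, forall_eq_or_imp]
        exact ⟨by omega, fun e he => by have := hBs.1 e he; omega⟩
  · have hxb' : x < b := lt_of_le_of_ne hxb (Ne.symm hbx)
    calc A ++ b :: B ++ [x] = A ++ (b :: B ++ [x]) := by simp
      CKEquiv _ (A ++ b :: x :: B) := (ckEquiv_cons_append_singleton hxb' hbB hBs).append_left A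
      CKEquiv _ (b :: (A ++ x :: B)) := ckEquiv_append_cons_cons hAs hA hxb'

lemma rowword_cons (r : List ℤ) (rest : List (List ℤ)) :
    rowword (r :: rest) = rowword rest ++ r := by
  simp [rowword]

lemma revrow_cons (r : List ℤ) (rest : List (List ℤ)) :
    revrow (r :: rest) = r.reverse ++ revrow rest := by
  simp [revrow, rowword]

instance : Trans RowLt RowLt RowLt := ⟨RowLt.trans⟩

lemma IncrTab.exists_lt_of_mem_tail {r s : List ℤ} {rest : List (List ℤ)}
    (hT : IncrTab (r :: rest)) (hs : s ∈ rest) {e : ℤ} (he : e ∈ s) : ∃ e' ∈ r, e' < e := by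
  have hrs : RowLt r s := (List.pairwise_cons.1 (incrTab_iff.1 hT).2.pairwise).1 s hs
  obtain ⟨i, hi, rfl⟩ := List.getElem_of_mem he
  have hir : i < r.length := hi.trans_le hrs.1
  refine ⟨r[i], List.getElem_mem hir, ?_⟩
  have := hrs.2 i hi
  rwa [List.getD_eq_getElem _ _ hi, List.getD_eq_getElem _ _ hir] at this

lemma IncrTab.eq_nil_of_revrow_eq_nil {T : List (List ℤ)} (hT : IncrTab T) (h : revrow T = []) :
    T = [] := by
  cases T with
  | nil => rfl
  | cons r rest =>
    rw [revrow_cons, List.append_eq_nil_iff, List.reverse_eq_nil_iff] at h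
    exact absurd h.1 (incrTab_cons_iff.1 hT).1.1

lemma ckEquiv_rowword_insertT {T : List (List ℤ)} (hT : IncrTab T) {x : ℤ}
    (hred : IsReducedWord (wordProd (rowword T ++ [x])) (rowword T ++ [x])) :
    CKEquiv (rowword T ++ [x]) (rowword (insertT T x)) := by
  induction T generalizing x with
  | nil => exact CKEquiv.refl _
  | cons r rest ih =>
    obtain ⟨⟨-, hr⟩, -, hrest⟩ := incrTab_cons_iff.1 hT
    rw [rowword_cons, List.append_assoc] at hred ⊢
    rw [insertT_cons]
    rcases hb : rowBump r x with _ | y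
    · rw [rowInsert_of_rowBump_eq_none hr hb]
      change CKEquiv _ (rowword ((r ++ [x]) :: rest))
      rw [rowword_cons]
      exact CKEquiv.refl _
    · have h₁ : CKEquiv (rowword rest ++ (r ++ [x])) (rowword rest ++ [y] ++ rowInsert r x) := by
        simpa using (ckEquiv_rowInsert hr hred.append.2 hb).append_left (rowword rest)
      calc rowword rest ++ (r ++ [x])
        CKEquiv _ (rowword rest ++ [y] ++ rowInsert r x) := h₁
        CKEquiv _ (rowword (insertT rest y) ++ rowInsert r x) :=
          (ih hrest (hred.of_ckEquiv h₁).append.1).append_right _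
        _ = rowword (rowInsert r x :: insertT rest y) := (rowword_cons _ _).symm

lemma exists_incrTab_ckEquiv_rowword {l : List ℤ} (h : IsReducedWord (wordProd l) l) :
    ∃ T, IncrTab T ∧ CKEquiv l (rowword T) := by
  induction l using List.reverseRecOn with
  | nil => exact ⟨[], incrTab_nil, CKEquiv.refl _⟩
  | append_singleton l x ih =>
    obtain ⟨T, hT, hck⟩ := ih h.append.1
    have hck' := hck.append_right [x]
    exact ⟨insertT T x, incrTab_insertT hT x,
      hck'.trans (ckEquiv_rowword_insertT hT (h.of_ckEquiv hck').isReducedWord_wordProd)⟩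

lemma IsReducedWord.exists_incrTab_ckEquiv_revrow {u : Equiv.Perm ℤ} {l : List ℤ}
    (h : IsReducedWord u l) : ∃ T, IncrTab T ∧ CKEquiv l (revrow T) := by
  obtain ⟨T, hT, hck⟩ := exists_incrTab_ckEquiv_rowword h.reverse.isReducedWord_wordProd
  exact ⟨T, hT, by simpa [revrow] using hck.reverse⟩

/-! ### Dominant permutations -/

def intervalRow (t : ℤ) (k : ℕ) : List ℤ := (List.range k).map fun j : ℕ => t + 1 + j

lemma intervalRow_zero (t : ℤ) : intervalRow t 0 = [] := rfl

lemma intervalRow_succ (t : ℤ) (k : ℕ) :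
    intervalRow t (k + 1) = (t + 1) :: intervalRow (t + 1) k := by
  simp only [intervalRow, List.range_succ_eq_map, List.map_cons, List.map_map]
  congr 1
  · simp
  · refine List.map_congr_left fun j _ => ?_
    simp only [Function.comp_apply, Nat.succ_eq_add_one, Nat.cast_add, Nat.cast_one]
    ring

lemma wordProd_intervalRow_apply (t : ℤ) (k : ℕ) (z : ℤ) :
    wordProd (intervalRow t k) z =
      if z = t + k + 1 then t + 1 else if t + 1 ≤ z ∧ z ≤ t + k then z + 1 else z := by
  induction k generalizing t with
  | zero =>
    simp only [intervalRow_zero, wordProd_nil, Equiv.Perm.one_apply, Nat.cast_zero]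
    split_ifs <;> omega
  | succ k ih =>
    rw [intervalRow_succ, wordProd_cons, Equiv.Perm.mul_apply, ih, sT_apply]
    push_cast
    split_ifs <;> omega

lemma eq_intervalRow_of_inv_apply {r : List ℤ} {t : ℤ} {k : ℕ} (hr : r.Pairwise (· < ·))
    (hbound : ∀ e ∈ r, t < e ∧ e ≤ t + k) (happ : (wordProd r)⁻¹ (t + 1) = t + 1 + k) :
    r = intervalRow t k := by
  induction r generalizing t k with
  | nil =>
    simp only [wordProd_nil, inv_one, Equiv.Perm.one_apply] at happ
    obtain rfl : k = 0 := by omega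
    rfl
  | cons a s ih =>
    simp only [List.pairwise_cons, List.forall_mem_cons] at hr hbound
    simp only [wordProd_cons, mul_inv_rev, sT_inv, Equiv.Perm.mul_apply, sT_apply] at happ
    by_cases ha : a = t + 1
    · subst ha
      obtain ⟨k, rfl⟩ : ∃ k', k = k' + 1 := ⟨k - 1, by omega⟩
      rw [if_pos rfl] at happ
      push_cast at hbound happ
      rw [intervalRow_succ, ih (k := k) hr.2
        (fun e he => ⟨hr.1 e he, by linarith [(hbound.2 e he).2]⟩) (by rw [happ]; ring)]
    · have hfix : FixesLE (wordProd s)⁻¹ (t + 1) :=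
        (fixesLE_wordProd fun e he => by have := hr.1 e he; omega).inv
      rw [if_neg (Ne.symm ha), if_neg (by omega), hfix _ le_rfl] at happ
      omega

/-- The Young diagram of `lam` translated by `(t, t)`. -/
def shiftDiag (t : ℤ) (lam : List ℕ) : Set (ℤ × ℤ) :=
  {p | t + 1 ≤ p.1 ∧ t + 1 ≤ p.2 ∧ p.2 ≤ t + (lam.getD (p.1 - t - 1).toNat 0 : ℤ)}

lemma shiftDiag_zero (lam : List ℕ) : shiftDiag 0 lam = YDiagL lam := by
  ext p
  simp [shiftDiag, YDiagL]

def shiftTlam : ℤ → List ℕ → List (List ℤ)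
  | _, [] => []
  | t, k :: mu => intervalRow t k :: shiftTlam (t + 1) mu

lemma mapIdx_intervalRow (lam : List ℕ) (t : ℤ) :
    lam.mapIdx (fun i k => intervalRow (t + i) k) = shiftTlam t lam := by
  induction lam generalizing t with
  | nil => rfl
  | cons k mu ih =>
    rw [List.mapIdx_cons, shiftTlam, ← ih (t + 1)]
    congr 1
    · simp
    · congr 1
      funext i j
      push_cast
      ring_nf

lemma Tlam_eq_shiftTlam (lam : List ℕ) : Tlam lam = shiftTlam 0 lam := by
  rw [← mapIdx_intervalRow, Tlam]
  congr 1
  funext i k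
  simp only [intervalRow, zero_add, Nat.cast_add, Nat.cast_one]
  refine List.map_congr_left fun j _ => ?_
  ring

lemma getD_le_head {k : ℕ} {mu : List ℕ} (h : (k :: mu).Pairwise (· ≥ ·)) (n : ℕ) :
    (k :: mu).getD n 0 ≤ k := by
  rcases n with _ | n
  · simp
  · rw [List.getD_cons_succ]
    rcases lt_or_ge n mu.length with hn | hn
    · rw [List.getD_eq_getElem _ _ hn]
      exact (List.pairwise_cons.1 h).1 _ (List.getElem_mem hn)
    · rw [List.getD_eq_default _ _ hn]
      exact Nat.zero_le _

lemma getD_cons_toNat (k : ℕ) (mu : List ℕ) {i t : ℤ} (hi : t + 1 < i) :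
    (k :: mu).getD (i - t - 1).toNat 0 = mu.getD (i - (t + 1) - 1).toNat 0 := by
  rw [show (i - t - 1).toNat = (i - (t + 1) - 1).toNat + 1 by omega, List.getD_cons_succ]

lemma mem_rotheD_iff (w : Equiv.Perm ℤ) (i γ : ℤ) :
    (i, γ) ∈ RotheD w ↔ γ < w i ∧ i < w⁻¹ γ := by
  constructor
  · rintro ⟨j, hij, hj, rfl⟩
    simpa using ⟨hj, hij⟩
  · rintro ⟨hγ, hi⟩
    exact ⟨w⁻¹ γ, hi, by simpa using hγ, by simp⟩

namespace FixesLE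

variable {u : Equiv.Perm ℤ} {t : ℤ}

lemma not_mem_rotheD (hfix : FixesLE u t) {i : ℤ} (hi : i ≤ t) (γ : ℤ) : (i, γ) ∉ RotheD u := by
  rw [mem_rotheD_iff, hfix i hi]
  rintro ⟨hγ, hi'⟩
  rw [hfix.inv γ (by omega)] at hi'
  omega

lemma mem_rotheD_succ_iff (hfix : FixesLE u t) (γ : ℤ) :
    (t + 1, γ) ∈ RotheD u ↔ t < γ ∧ γ < u (t + 1) := by
  rw [mem_rotheD_iff]
  constructor
  · rintro ⟨hγ, hinv⟩
    refine ⟨?_, hγ⟩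
    by_contra! hγt
    rw [hfix.inv γ hγt] at hinv
    omega
  · rintro ⟨hγt, hγ⟩
    refine ⟨hγ, lt_of_le_of_ne (hfix.inv.lt_apply hγt) fun h => ?_⟩
    rw [h] at hγ
    simp at hγ

end FixesLE

lemma eq_one_of_rotheD_eq_empty {u : Equiv.Perm ℤ} {t : ℤ} (hfix : FixesLE u t)
    (h : RotheD u = ∅) : u = 1 := by
  refine eq_one_of_invSet_eq_empty hfix (Set.eq_empty_of_forall_notMem fun ⟨a, b⟩ hab => ?_)
  have : (a, u b) ∈ RotheD u := ⟨b, hab.1, hab.2, rfl⟩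
  simp [h] at this

section Dominant

variable {w : Equiv.Perm ℤ} {t : ℤ} {k : ℕ} {mu : List ℕ}

lemma apply_succ_of_rotheD_eq (hfix : FixesLE w t) (hD : RotheD w = shiftDiag t (k :: mu)) :
    w (t + 1) = t + k + 1 := by
  have hrow (γ : ℤ) : t < γ ∧ γ < w (t + 1) ↔ t < γ ∧ γ ≤ t + k := by
    rw [← hfix.mem_rotheD_succ_iff, hD]
    simp [shiftDiag]
  have := hfix.lt_apply (lt_add_one t)
  have h₁ := hrow (w (t + 1) - 1)
  have h₂ := hrow (t + k)
  omega

lemma le_of_rotheD_eq_of_descent (hsorted : (k :: mu).Pairwise (· ≥ ·))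
    (hD : RotheD w = shiftDiag t (k :: mu)) {x : ℤ} (hx : w⁻¹ (x + 1) < w⁻¹ x) : x ≤ t + k := by
  have hmem : (w⁻¹ (x + 1), x) ∈ RotheD w := (mem_rotheD_iff _ _ _).2 ⟨by simp, hx⟩
  rw [hD] at hmem
  exact hmem.2.2.trans (by simpa using getD_le_head hsorted _)

lemma FixesLE.intervalRow_mul (hfix : FixesLE w t) (hw : w (t + 1) = t + k + 1) :
    FixesLE (wordProd (intervalRow t k) * w) (t + 1) := by
  intro x hx
  rw [Equiv.Perm.mul_apply, wordProd_intervalRow_apply]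
  rcases hx.lt_or_eq with hx | rfl
  · rw [hfix x (by omega)]
    split_ifs <;> omega
  · rw [hw]
    simp

lemma rotheD_intervalRow_mul (hsorted : (k :: mu).Pairwise (· ≥ ·)) (hfix : FixesLE w t)
    (hD : RotheD w = shiftDiag t (k :: mu)) :
    RotheD (wordProd (intervalRow t k) * w) = shiftDiag (t + 1) mu := by
  have hw := apply_succ_of_rotheD_eq hfix hD
  set c := wordProd (intervalRow t k)
  ext ⟨i, γ⟩
  obtain ⟨δ, rfl⟩ := c.surjective γ
  by_cases hi : i ≤ t + 1
  · refine iff_of_false ((hfix.intervalRow_mul hw).not_mem_rotheD hi _) ?_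
    simp only [shiftDiag, Set.mem_ofPred_eq]
    omega
  push Not at hi
  have hwi : w i ≠ t + k + 1 := fun h => by
    rw [← hw] at h
    exact absurd (w.injective h) (by omega)
  have hδ : δ = t + k + 1 → w⁻¹ δ = t + 1 := by
    rintro rfl
    rw [← hw]
    simp
  have hwit : t < w i := hfix.lt_apply (by omega)
  have hmemw := mem_rotheD_iff w i δ
  rw [hD] at hmemw
  simp only [shiftDiag, Set.mem_ofPred_eq, getD_cons_toNat k mu hi] at hmemw ⊢
  have hle := getD_le_head hsorted (i - t - 1).toNat
  rw [getD_cons_toNat k mu hi] at hle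
  rw [mem_rotheD_iff, Equiv.Perm.mul_apply, mul_inv_rev, Equiv.Perm.mul_apply,
    show c⁻¹ (c δ) = δ from c.symm_apply_apply δ, wordProd_intervalRow_apply,
    wordProd_intervalRow_apply]
  -- `c` is increasing away from `t + k + 1 = w (t + 1)`, so `δ ↦ c δ` maps row `i` of `D(w)`
  -- onto row `i` of `D(c w)`
  split_ifs <;> omega

lemma head_eq_intervalRow (hsorted : (k :: mu).Pairwise (· ≥ ·)) (hfix : FixesLE w t)
    (hD : RotheD w = shiftDiag t (k :: mu)) {r : List ℤ} {rest : List (List ℤ)}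
    (hT : IncrTab (r :: rest)) (hred : IsReducedWord w (revrow (r :: rest))) :
    r = intervalRow t k := by
  obtain ⟨⟨hne, hr⟩, -, -⟩ := incrTab_cons_iff.1 hT
  have hletters := hred.lt_of_mem hfix
  rw [revrow_cons] at hletters hred
  have hr_gt (e : ℤ) (he : e ∈ r) : t < e := hletters e (by simp [he])
  have hrest_gt (e : ℤ) (he : e ∈ revrow rest) : t + 1 < e := by
    simp only [revrow, rowword, List.mem_reverse, List.mem_flatten] at he
    obtain ⟨s, hs, hes⟩ := he
    obtain ⟨e', he', hlt⟩ := hT.exists_lt_of_mem_tail hs hes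
    linarith [hr_gt e' he']
  have hw : (wordProd r)⁻¹ (t + 1) = t + 1 + k := by
    have h₁ := apply_succ_of_rotheD_eq hfix hD
    rw [← hred.1, wordProd_append, wordProd_reverse, Equiv.Perm.mul_apply,
      fixesLE_wordProd hrest_gt (t + 1) le_rfl] at h₁
    rw [h₁]
    ring
  obtain ⟨r', b, rfl⟩ : ∃ r' b, r = r' ++ [b] := by
    simpa using (List.eq_nil_or_concat r).resolve_left hne
  have hdesc : w⁻¹ (b + 1) < w⁻¹ b := by
    refine IsReducedWord.descent (m := r'.reverse ++ revrow rest) ?_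
    simpa using hred
  have hb := le_of_rotheD_eq_of_descent hsorted hD hdesc
  refine eq_intervalRow_of_inv_apply hr (fun e he => ⟨hr_gt e he, ?_⟩) hw
  rcases List.mem_append.1 he with he | he
  · exact ((List.pairwise_append.1 hr).2.2 e he b (by simp)).le.trans hb
  · simpa [List.mem_singleton.1 he] using hb

theorem eq_shiftTlam_of_isReducedWord (lam : List ℕ) (hsorted : lam.Pairwise (· ≥ ·))
    (hpos : ∀ k ∈ lam, 0 < k) (hfix : FixesLE w t) (hD : RotheD w = shiftDiag t lam)
    {T : List (List ℤ)} (hT : IncrTab T) (hred : IsReducedWord w (revrow T)) :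
    T = shiftTlam t lam := by
  induction lam generalizing t w T with
  | nil =>
    obtain rfl : w = 1 := eq_one_of_rotheD_eq_empty hfix (by
      rw [hD]
      ext p
      simp only [shiftDiag, List.getD_nil, Set.mem_ofPred_eq, Set.mem_empty_iff_false, iff_false]
      omega)
    exact hT.eq_nil_of_revrow_eq_nil hred.eq_nil_of_one
  | cons k mu ih =>
    obtain ⟨hk, hmu⟩ := List.forall_mem_cons.1 hpos
    cases T with
    | nil =>
      have hmem : (t + 1, t + 1) ∈ RotheD w := by
        rw [hD]
        simp [shiftDiag]
        omega
      rw [← hred.1] at hmem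
      simp [mem_rotheD_iff, revrow, rowword] at hmem
    | cons r rest =>
      obtain rfl := head_eq_intervalRow hsorted hfix hD hT hred
      rw [revrow_cons] at hred
      have hred' := hred.of_append
      rw [wordProd_reverse, inv_inv] at hred'
      rw [shiftTlam, ih (List.pairwise_cons.1 hsorted).2 hmu
        (hfix.intervalRow_mul (apply_succ_of_rotheD_eq hfix hD))
        (rotheD_intervalRow_mul hsorted hfix hD) (incrTab_cons_iff.1 hT).2.2 hred']

end Dominant

/-- If `w_λ ∈ S_∞` is the dominant permutation of shape `λ`
(i.e. `D(w_λ) = D_λ`), then `R(w_λ)` is a single Coxeter–Knuth equivalence class and the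
tableau `T_λ` with entry `i + j - 1` in box `(i,j)` is the unique increasing tableau of
partition shape whose reverse row reading word is a reduced word for `w_λ`. -/
theorem dominant_single_CK_class (w : Equiv.Perm ℤ) (hw : w ∈ SinftySet)
    (lam : List ℕ) (hsorted : lam.Pairwise (· ≥ ·)) (hpos : ∀ k ∈ lam, 0 < k)
    (hD : RotheD w = YDiagL lam) :
    (∃ x, {l : List ℤ | IsReducedWord w l} = {y | CKEquiv x y}) ∧
    IncrTab (Tlam lam) ∧ IsReducedWord w (revrow (Tlam lam)) ∧
    (∀ T : List (List ℤ), IncrTab T → IsReducedWord w (revrow T) → T = Tlam lam) := by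
  obtain ⟨l₀, hl₀, rfl⟩ := hw
  have hfix : FixesLE (wordProd l₀) 0 := fixesLE_wordProd hl₀
  have huniq (T : List (List ℤ)) (hT : IncrTab T) (hred : IsReducedWord (wordProd l₀) (revrow T)) :
      T = Tlam lam := by
    rw [Tlam_eq_shiftTlam]
    exact eq_shiftTlam_of_isReducedWord lam hsorted hpos hfix (by rw [hD, shiftDiag_zero]) hT hred
  have hclass (l : List ℤ) (hl : IsReducedWord (wordProd l₀) l) :
      IncrTab (Tlam lam) ∧ CKEquiv l (revrow (Tlam lam)) := by
    obtain ⟨T, hT, hck⟩ := hl.exists_incrTab_ckEquiv_revrow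
    obtain rfl := huniq T hT (hl.of_ckEquiv hck)
    exact ⟨hT, hck⟩
  obtain ⟨l, hl⟩ := exists_isReducedWord (rfl : wordProd l₀ = _)
  obtain ⟨hTab, hck⟩ := hclass l hl
  have hred := hl.of_ckEquiv hck
  exact ⟨⟨revrow (Tlam lam), Set.ext fun y =>
    ⟨fun hy => (hclass y hy).2.symm, hred.of_ckEquiv⟩⟩, hTab, hred, huniq⟩
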